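/- Let N ≥ 1 and let b : ℝ → ℂ^N be a continuously differentiable solution of the toy model system: for each j = 1,…,N, db_j/dt = i(−|b_j|² b_j + 2 \bar{b_j}(b_{j−1}² + b_{j+1}²)), with the Dirichlet boundary convention b_0(t) = b_{N+1}(t) = 0. Then the mass M[b(t)] = Σ_{j=1}^N |b_j(t)|² is constant in time: M[b(t)] = M[b(0)] for all t. -/

import Mathlib

/-! Writing `d_j` for the right-hand side of the system,
`d/dt |b_j|² = 2 Re (conj b_j d_j) = 2 (F_{j-1} - F_j)` with the flux
`F_j = Im (conj b_j² b_{j+1}²)`: the self-interaction `-|b_j|² b_j` contributes nothing, and the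
nearest-neighbour interactions telescope when summed over `j`. The end terms `F_0` and `F_N`
vanish by the Dirichlet conditions `b_0 = b_{N+1} = 0`. -/

open Complex Finset ComplexConjugate

theorem HasDerivAt.complex_normSq {f : ℝ → ℂ} {f' : ℂ} {x : ℝ} (hf : HasDerivAt f f' x) :
    HasDerivAt (fun s => normSq (f s)) (2 * (conj (f x) * f').re) x := by
  simpa [← Complex.sq_norm, Complex.inner, mul_comm f'] using hf.norm_sq

theorem Finset.sum_Icc_pred_sub {M : Type*} [AddCommGroup M] (F : ℕ → M) (N : ℕ) :
    ∑ j ∈ Icc 1 N, (F (j - 1) - F j) = F 0 - F N := by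
  induction N with
  | zero => simp
  | succ n ih => rw [sum_Icc_succ_top (by omega), ih]; simp

namespace ToyModel

noncomputable def vectorField (b : ℕ → ℂ) (j : ℕ) : ℂ :=
  I * (-((normSq (b j) : ℂ)) * b j + 2 * conj (b j) * (b (j - 1) ^ 2 + b (j + 1) ^ 2))

noncomputable def flux (b : ℕ → ℂ) (j : ℕ) : ℝ :=
  (conj (b j) ^ 2 * b (j + 1) ^ 2).im

noncomputable def mass (N : ℕ) (b : ℕ → ℂ) : ℝ :=
  ∑ j ∈ Icc 1 N, normSq (b j)

theorem re_conj_mul_vectorField (b : ℕ → ℂ) {j : ℕ} (hj : 1 ≤ j) :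
    (conj (b j) * vectorField b j).re = 2 * (flux b (j - 1) - flux b j) := by
  obtain ⟨k, rfl⟩ := Nat.exists_eq_add_of_le' hj
  simp only [vectorField, flux, Nat.add_sub_cancel, pow_two, mul_re, mul_im, conj_re, conj_im,
    I_re, I_im, add_re, add_im, neg_re, neg_im, ofReal_re, ofReal_im, re_ofNat, im_ofNat]
  ring

theorem sum_re_conj_mul_vectorField_eq_zero {N : ℕ} {b : ℕ → ℂ} (h0 : b 0 = 0)
    (hN : b (N + 1) = 0) : ∑ j ∈ Icc 1 N, (conj (b j) * vectorField b j).re = 0 := by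
  rw [sum_congr rfl fun j hj => re_conj_mul_vectorField b (mem_Icc.1 hj).1, ← mul_sum,
    sum_Icc_pred_sub]
  simp [flux, h0, hN]

theorem hasDerivAt_mass_zero {N : ℕ} {b : ℝ → ℕ → ℂ} {t : ℝ} (h0 : b t 0 = 0)
    (hN : b t (N + 1) = 0)
    (hb : ∀ j ∈ Icc 1 N, HasDerivAt (fun s => b s j) (vectorField (b t) j) t) :
    HasDerivAt (fun s => mass N (b s)) 0 t := by
  have hsum := HasDerivAt.fun_sum fun j hj => (hb j hj).complex_normSq
  rwa [← mul_sum, sum_re_conj_mul_vectorField_eq_zero h0 hN, mul_zero] at hsum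

end ToyModel

open ToyModel in
theorem toy_model_mass_conservation
    (N : ℕ) (b : ℝ → ℕ → ℂ)
    (hbc0 : ∀ t : ℝ, b t 0 = 0) (hbcN : ∀ t : ℝ, b t (N + 1) = 0)
    (hode : ∀ j ∈ Finset.Icc 1 N, ∀ t : ℝ,
      HasDerivAt (fun s : ℝ => b s j)
        (Complex.I * (-((Complex.normSq (b t j) : ℂ)) * b t j
          + 2 * (starRingEnd ℂ) (b t j) * ((b t (j - 1)) ^ 2 + (b t (j + 1)) ^ 2))) t) :
    ∀ t : ℝ, ∑ j ∈ Finset.Icc 1 N, Complex.normSq (b t j)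
      = ∑ j ∈ Finset.Icc 1 N, Complex.normSq (b 0 j) := by
  have hmass (s : ℝ) : HasDerivAt (fun u => mass N (b u)) 0 s :=
    hasDerivAt_mass_zero (hbc0 s) (hbcN s) fun j hj => hode j hj s
  exact fun t => is_const_of_deriv_eq_zero (fun s => (hmass s).differentiableAt)
    (fun s => (hmass s).deriv) t 0
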